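/- Let p be a prime and L a normalized lattice such that either Q(L_p) ≠ 2ℤ_p, or p = 2 and s(L) = 2ℤ. Let σ: G → L be a representation of a lattice G by L. Then σ(Λ_{2p}(G)) = Λ_{2p}(σ(G)). Furthermore, if σ is a primitive representation, then σ(Λ_{2p}(G)) is a primitive sublattice of Λ_{2p}(L). -/

import Mathlib

open Matrix

namespace Paper

/-- The quadratic map attached to a Gram matrix `G` over a commutative ring. -/
def Qf {R : Type*} [CommRing R] {m : ℕ} (G : Matrix (Fin m) (Fin m) R) (x : Fin m → R) : R :=
  x ⬝ᵥ (G *ᵥ x)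

/-- The bilinear form attached to a Gram matrix `G`. -/
def Bf {R : Type*} [CommRing R] {m : ℕ} (G : Matrix (Fin m) (Fin m) R) (x y : Fin m → R) : R :=
  x ⬝ᵥ (G *ᵥ y)

/-- `G` is the Gram matrix of a positive definite integral `ℤ`-lattice. -/
def IsLat {m : ℕ} (G : Matrix (Fin m) (Fin m) ℤ) : Prop := G.IsSymm ∧ G.PosDef

/-- The lattice with Gram matrix `A` is represented by the lattice with Gram matrix `G`
(the representation is `x ↦ x ᵥ* T`). -/
def Rep {R : Type*} [CommRing R] {k m : ℕ} (A : Matrix (Fin k) (Fin k) R)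
    (G : Matrix (Fin m) (Fin m) R) : Prop :=
  ∃ T : Matrix (Fin k) (Fin m) R, A = T * G * Tᵀ

/-- Primitive representation: the image is a direct summand, i.e. the map `x ↦ x ᵥ* T`
admits a linear retraction. -/
def PrimRep {R : Type*} [CommRing R] {k m : ℕ} (A : Matrix (Fin k) (Fin k) R)
    (G : Matrix (Fin m) (Fin m) R) : Prop :=
  ∃ T : Matrix (Fin k) (Fin m) R, A = T * G * Tᵀ ∧
    ∃ U : Matrix (Fin m) (Fin k) R, T * U = 1

/-- The `p`-adic localization `L_p` of an integral matrix/lattice. -/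
noncomputable def padic (p : ℕ) [Fact p.Prime] {k m : ℕ} (A : Matrix (Fin k) (Fin m) ℤ) :
    Matrix (Fin k) (Fin m) ℤ_[p] := A.map (Int.cast : ℤ → ℤ_[p])

/-- Isometry of two Gram matrices over a commutative ring. -/
def Isom {R : Type*} [CommRing R] {m : ℕ} (A B : Matrix (Fin m) (Fin m) R) : Prop :=
  ∃ T : Matrix (Fin m) (Fin m) R, IsUnit T.det ∧ A = T * B * Tᵀ

/-- `G'` belongs to the genus of `G`. -/
def InGenus {m : ℕ} (G G' : Matrix (Fin m) (Fin m) ℤ) : Prop :=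
  IsLat G' ∧ ∀ (p : ℕ) [Fact p.Prime], Isom (padic p G') (padic p G)

/-- `A` is represented by the genus of `G`. -/
def GenusRep {k m : ℕ} (A : Matrix (Fin k) (Fin k) ℤ) (G : Matrix (Fin m) (Fin m) ℤ) : Prop :=
  ∃ G' : Matrix (Fin m) (Fin m) ℤ, InGenus G G' ∧ Rep A G'

/-- `A` is primitively represented by the genus of `G`. -/
def GenusPrimRep {k m : ℕ} (A : Matrix (Fin k) (Fin k) ℤ) (G : Matrix (Fin m) (Fin m) ℤ) : Prop :=
  ∃ G' : Matrix (Fin m) (Fin m) ℤ, InGenus G G' ∧ PrimRep A G'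

/-- `G` is an `n`-regular lattice. -/
def Regular (n : ℕ) {m : ℕ} (G : Matrix (Fin m) (Fin m) ℤ) : Prop :=
  ∀ A : Matrix (Fin n) (Fin n) ℤ, IsLat A → GenusRep A G → Rep A G

/-- `G` is a strictly `n`-regular lattice. -/
def StrictlyRegular (n : ℕ) {m : ℕ} (G : Matrix (Fin m) (Fin m) ℤ) : Prop :=
  ∀ A : Matrix (Fin n) (Fin n) ℤ, IsLat A → GenusPrimRep A G → PrimRep A G

/-- The `i`-th successive minimum of the lattice with Gram matrix `G`. -/
noncomputable def mu {m : ℕ} (G : Matrix (Fin m) (Fin m) ℤ) (i : ℕ) : ℕ :=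
  sInf {t : ℕ | ∃ v : Fin i → (Fin m → ℤ), LinearIndependent ℤ v ∧ ∀ j, Qf G (v j) ≤ (t : ℤ)}

/-- Two lattices are similar if one is isometric to a positive rational scaling of the other. -/
def Similar {m : ℕ} (G G' : Matrix (Fin m) (Fin m) ℤ) : Prop :=
  ∃ (r : ℚ) (T : Matrix (Fin m) (Fin m) ℤ), 0 < r ∧ IsUnit T.det ∧
    G'.map (Int.cast : ℤ → ℚ) = r • ((T * G * Tᵀ).map (Int.cast : ℤ → ℚ))

/-- The norm ideal `n(L)` of a lattice. -/
def NormIdeal {m : ℕ} (G : Matrix (Fin m) (Fin m) ℤ) : Ideal ℤ :=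
  Ideal.span (Set.range (Qf G))

/-- The scale ideal `s(L)` of a lattice. -/
def ScaleIdeal {m : ℕ} (G : Matrix (Fin m) (Fin m) ℤ) : Ideal ℤ :=
  Ideal.span {a : ℤ | ∃ i j, G i j = a}

/-- A lattice is normalized if its norm ideal is `2ℤ`. -/
def Normalized {m : ℕ} (G : Matrix (Fin m) (Fin m) ℤ) : Prop :=
  NormIdeal G = Ideal.span {(2 : ℤ)}

/-- The Watson sublattice `Λ_k(L)`, as a subset of the underlying module. -/
def Lambda {R : Type*} [CommRing R] (k : ℕ) {m : ℕ} (G : Matrix (Fin m) (Fin m) R) :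
    Set (Fin m → R) :=
  {x | ∀ z, (k : R) ∣ Qf G (x + z) - Qf G z}

/-- The Watson sublattice `Λ_k` of a sublattice `S` (with the quadratic map inherited
from the ambient Gram matrix `G`). -/
def LambdaIn {R : Type*} [CommRing R] (k : ℕ) {m : ℕ} (G : Matrix (Fin m) (Fin m) R)
    (S : Set (Fin m → R)) : Set (Fin m → R) :=
  {x ∈ S | ∀ z ∈ S, (k : R) ∣ Qf G (x + z) - Qf G z}

lemma Qf_add {R : Type*} [CommRing R] {m : ℕ} (G : Matrix (Fin m) (Fin m) R)
    (x z : Fin m → R) :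
    Qf G (x + z) = Qf G x + Qf G z + (x ⬝ᵥ (G *ᵥ z) + z ⬝ᵥ (G *ᵥ x)) := by
  simp [Qf, Matrix.mulVec_add, dotProduct_add, add_dotProduct]
  ring

lemma Qf_smul {R : Type*} [CommRing R] {m : ℕ} (G : Matrix (Fin m) (Fin m) R)
    (c : R) (x : Fin m → R) : Qf G (c • x) = c ^ 2 * Qf G x := by
  simp [Qf, Matrix.mulVec_smul, smul_dotProduct, dotProduct_smul, smul_eq_mul]
  ring

/-- The Watson sublattice `Λ_k(L)` as a `ℤ`-submodule. -/
def LambdaMod (k : ℕ) {m : ℕ} (G : Matrix (Fin m) (Fin m) ℤ) : Submodule ℤ (Fin m → ℤ) where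
  carrier := Lambda k G
  zero_mem' := by intro z; simp
  add_mem' := by
    intro x y hx hy z
    have h := dvd_add (hx (y + z)) (hy z)
    have e : Qf G (x + (y + z)) - Qf G (y + z) + (Qf G (y + z) - Qf G z)
        = Qf G (x + y + z) - Qf G z := by
      rw [add_assoc]; ring
    exact e ▸ h
  smul_mem' := by
    intro c x hx z
    have h0 : (k : ℤ) ∣ Qf G x := by simpa [Qf] using hx 0
    have hz : (k : ℤ) ∣ Qf G x + (x ⬝ᵥ (G *ᵥ z) + z ⬝ᵥ (G *ᵥ x)) := by
      have := hx z
      rwa [Qf_add, show Qf G x + Qf G z + (x ⬝ᵥ (G *ᵥ z) + z ⬝ᵥ (G *ᵥ x)) - Qf G z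
          = Qf G x + (x ⬝ᵥ (G *ᵥ z) + z ⬝ᵥ (G *ᵥ x)) by ring] at this
    have hcross : (k : ℤ) ∣ (x ⬝ᵥ (G *ᵥ z) + z ⬝ᵥ (G *ᵥ x)) := by
      simpa using dvd_sub hz h0
    have key : Qf G (c • x + z) - Qf G z
        = c ^ 2 * Qf G x + c * (x ⬝ᵥ (G *ᵥ z) + z ⬝ᵥ (G *ᵥ x)) := by
      have e1 : (c • x) ⬝ᵥ (G *ᵥ z) = c * (x ⬝ᵥ (G *ᵥ z)) := by
        rw [smul_dotProduct, smul_eq_mul]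
      have e2 : z ⬝ᵥ (G *ᵥ (c • x)) = c * (z ⬝ᵥ (G *ᵥ x)) := by
        rw [Matrix.mulVec_smul, dotProduct_smul, smul_eq_mul]
      rw [Qf_add, Qf_smul, e1, e2]
      ring
    rw [key]
    exact dvd_add (Dvd.dvd.mul_left h0 _) (Dvd.dvd.mul_left hcross c)

/-- The set of values of `Q` on `L_p` is all of `2ℤ_p`. -/
def QValuesFull (p : ℕ) [Fact p.Prime] {m : ℕ} (G : Matrix (Fin m) (Fin m) ℤ) : Prop :=
  Set.range (Qf (padic p G)) = {a : ℤ_[p] | (2 : ℤ_[p]) ∣ a}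

/-- One Watson step followed by scaling by `r`:
`G'` is a Gram matrix of the scaled lattice `Λ_{2p}^{(r)}(G)`. -/
def LambdaScaledStep (p : ℕ) (r : ℚ) {m : ℕ} (G G' : Matrix (Fin m) (Fin m) ℤ) : Prop :=
  ∃ T : Matrix (Fin m) (Fin m) ℤ, LinearIndependent ℤ (fun i => T i) ∧
    Submodule.span ℤ (Set.range T) = LambdaMod (2 * p) G ∧
    G'.map (Int.cast : ℤ → ℚ) = r • ((T * G * Tᵀ).map (Int.cast : ℤ → ℚ))

/-- An admissible chain of scaled Watson transformations at `p`, starting from `G`: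
every intermediate lattice is normalized. -/
def AdmissibleChain (p : ℕ) {m : ℕ} (G : Matrix (Fin m) (Fin m) ℤ) (l : ℕ)
    (rs : Fin l → ℚ) (Ls : Fin (l + 1) → Matrix (Fin m) (Fin m) ℤ) : Prop :=
  Ls 0 = G ∧ (∀ i, 0 < rs i) ∧
  ∀ i : Fin l, LambdaScaledStep p (rs i) (Ls i.castSucc) (Ls i.succ) ∧ Normalized (Ls i.succ)

/-- `L'_p` has an orthogonal direct summand isometric to the hyperbolic plane over `ℤ_p`. -/
def HypSplit (p : ℕ) [Fact p.Prime] {m : ℕ} (L' : Matrix (Fin m) (Fin m) ℤ) : Prop :=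
  ∃ (T : Matrix (Fin m) (Fin m) ℤ_[p]) (i0 i1 : Fin m), i0 ≠ i1 ∧ IsUnit T.det ∧
    (T * padic p L' * Tᵀ) i0 i0 = 0 ∧ (T * padic p L' * Tᵀ) i0 i1 = 1 ∧
    (T * padic p L' * Tᵀ) i1 i0 = 1 ∧ (T * padic p L' * Tᵀ) i1 i1 = 0 ∧
    ∀ j, j ≠ i0 → j ≠ i1 →
      (T * padic p L' * Tᵀ) i0 j = 0 ∧ (T * padic p L' * Tᵀ) i1 j = 0 ∧
      (T * padic p L' * Tᵀ) j i0 = 0 ∧ (T * padic p L' * Tᵀ) j i1 = 0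

/-- The conclusions of Corollary 3.5 for the final lattice `L'` of an admissible chain:
`L'` is a normalized strictly `n`-regular lattice, `Q(L'_p) = 2ℤ_p`, and for every prime
`q ≠ p` the lattice `L'_q` is isometric to a scaling of `G_q`. -/
def GoodTarget (n p : ℕ) [Fact p.Prime] {m : ℕ} (G L' : Matrix (Fin m) (Fin m) ℤ) : Prop :=
  IsLat L' ∧ Normalized L' ∧ StrictlyRegular n L' ∧ QValuesFull p L' ∧
  ∀ (q : ℕ) [Fact q.Prime], q ≠ p →
    ∃ (c : ℚ) (T : Matrix (Fin m) (Fin m) ℤ_[q]), 0 < c ∧ IsUnit T.det ∧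
      L'.map (Int.cast : ℤ → ℚ_[q])
        = (c : ℚ_[q]) • ((T * padic q G * Tᵀ).map ((↑) : ℤ_[q] → ℚ_[q]))

/-!
Since `Q(a T) = Q_A(a)`, the equality `σ(Λ_{2p}(G)) = Λ_{2p}(σ(G))` is formal. The hypothesis
on `L` makes `Λ_{2p}(L) = {x | 2p ∣ Q(x)}`: the cross term `2 B(x, z)` of `Q(x + z) - Q(z)` is
divisible by `2p` because for `p = 2` and `s(L) = 2ℤ` every `B(x, z)` is even, while if
`2p ∣ Q(x)` and `p ∤ B(x, z)`, Hensel's lemma applied to `r ↦ Q(r x + z)` shows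
`Q(L_p) = 2ℤ_p`. Hence `σ(Λ_{2p}(G)) = Λ_{2p}(L) ∩ σ(G)`; for primitive `σ` this is saturated
in `Λ_{2p}(L)`, so the quotient is torsion-free, hence free, and the sublattice splits off.
-/

end Paper

theorem Submodule.exists_isCompl_of_projective_quotient {R M : Type*} [Ring R] [AddCommGroup M]
    [Module R M] (N : Submodule R M) [Module.Projective R (M ⧸ N)] :
    ∃ C : Submodule R M, IsCompl N C := by
  obtain ⟨g, hg⟩ := N.mkQ.exists_rightInverse_of_surjective N.range_mkQ
  have hidem : IsIdempotentElem (g ∘ₗ N.mkQ) := by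
    rw [IsIdempotentElem, Module.End.mul_eq_comp, LinearMap.comp_assoc,
      ← LinearMap.comp_assoc N.mkQ, hg, LinearMap.id_comp]
  have hg_inj : Function.Injective g :=
    Function.LeftInverse.injective (g := N.mkQ) (LinearMap.congr_fun hg)
  have hker : LinearMap.ker (g ∘ₗ N.mkQ) = N := by
    rw [LinearMap.ker_comp_of_ker_eq_bot _ (LinearMap.ker_eq_bot.2 hg_inj), N.ker_mkQ]
  exact ⟨_, hker ▸ (LinearMap.IsIdempotentElem.isCompl hidem).symm⟩

theorem Submodule.exists_inf_eq_bot_sup_eq_of_smul_mem {R M : Type*} [CommRing R] [IsDomain R]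
    [IsPrincipalIdealRing R] [AddCommGroup M] [Module R M] {N P : Submodule R M}
    [Module.Finite R P] (hNP : N ≤ P) (hsat : ∀ c : R, c ≠ 0 → ∀ y ∈ P, c • y ∈ N → y ∈ N) :
    ∃ C : Submodule R M, N ⊓ C = ⊥ ∧ N ⊔ C = P := by
  set N' := N.comap P.subtype
  have : Module.IsTorsionFree R (P ⧸ N') := by
    refine .of_smul_eq_zero fun c y hcy => or_iff_not_imp_left.2 fun hc => ?_
    obtain ⟨y, rfl⟩ := N'.mkQ_surjective y
    rw [← map_smul, Submodule.mkQ_apply, Submodule.Quotient.mk_eq_zero] at hcy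
    rw [Submodule.mkQ_apply, Submodule.Quotient.mk_eq_zero]
    exact hsat c hc y y.2 hcy
  obtain ⟨C', hC'⟩ := N'.exists_isCompl_of_projective_quotient
  have hN : N'.map P.subtype = N := by
    rw [Submodule.map_comap_subtype, inf_eq_right.2 hNP]
  refine ⟨C'.map P.subtype, ?_, ?_⟩
  · rw [← hN, ← Submodule.map_inf _ P.injective_subtype, hC'.inf_eq_bot, Submodule.map_bot]
  · rw [← hN, ← Submodule.map_sup, hC'.sup_eq_top, Submodule.map_top, Submodule.range_subtype]

theorem Matrix.mem_range_vecMul_of_smul_mem {R ι κ : Type*} [CommRing R] [IsDomain R]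
    [Fintype ι] [Fintype κ] [DecidableEq ι] {T : Matrix ι κ R} {U : Matrix κ ι R}
    (hU : T * U = 1) {c : R} (hc : c ≠ 0) {y : κ → R} (hy : c • y ∈ Set.range (· ᵥ* T)) :
    y ∈ Set.range (· ᵥ* T) := by
  obtain ⟨a, ha⟩ := hy
  refine ⟨y ᵥ* U, smul_right_injective _ hc ?_⟩
  simp only at ha ⊢
  rw [← smul_vecMul, ← smul_vecMul, ← ha, vecMul_vecMul a T U, hU, vecMul_one]

open Polynomial in
theorem PadicInt.exists_p_mul_mul_sq_add_mul_eq {p : ℕ} [Fact p.Prime] {b : ℤ_[p]}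
    (hb : IsUnit b) (c t : ℤ_[p]) : ∃ r : ℤ_[p], p * c * r ^ 2 + b * r = t := by
  have norm_p_mul_lt (x : ℤ_[p]) : ‖(p : ℤ_[p]) * x‖ < 1 :=
    (PadicInt.norm_lt_one_iff_dvd _).2 (dvd_mul_right _ _)
  set a := t * ↑hb.unit⁻¹
  have hba : b * a = t := by rw [mul_left_comm, hb.mul_val_inv, mul_one]
  set F : ℤ_[p][X] := C (p * c) * X ^ 2 + C b * X - C t
  have hFa : F.aeval a = p * (c * a ^ 2) := by
    simp only [F, coe_aeval_eq_eval, eval_sub, eval_add, eval_mul, eval_C, eval_pow, eval_X, hba]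
    ring
  have hF'a : F.derivative.aeval a = b + p * (2 * c * a) := by
    simp only [F, coe_aeval_eq_eval, derivative_sub, derivative_add, derivative_mul,
      derivative_C, derivative_X_pow, derivative_X, eval_sub, eval_add, eval_mul, eval_C,
      eval_pow, eval_X, eval_zero, eval_one]
    ring
  have hF'a_norm : ‖F.derivative.aeval a‖ = 1 := by
    have hb1 := PadicInt.isUnit_iff.1 hb
    rw [hF'a, PadicInt.norm_add_eq_max_of_ne (hb1 ▸ (norm_p_mul_lt _).ne'), hb1,
      max_eq_left (norm_p_mul_lt _).le]
  obtain ⟨r, hr, -⟩ := hensels_lemma (F := F) (a := a)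
    (by rw [hF'a_norm, one_pow, hFa]; exact norm_p_mul_lt _)
  refine ⟨r, ?_⟩
  simp only [F, coe_aeval_eq_eval, eval_sub, eval_add, eval_mul, eval_C, eval_pow, eval_X] at hr
  linear_combination hr

namespace Paper

section Forms

variable {R : Type*} [CommRing R] {m : ℕ}

lemma Bf_smul_left (G : Matrix (Fin m) (Fin m) R) (r : R) (x y : Fin m → R) :
    Bf G (r • x) y = r * Bf G x y :=
  smul_dotProduct r x _

lemma Qf_add_of_isSymm {G : Matrix (Fin m) (Fin m) R} (hG : G.IsSymm) (x z : Fin m → R) :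
    Qf G (x + z) = Qf G x + Qf G z + 2 * Bf G x z := by
  rw [Qf_add, Bf, dotProduct_mulVec z, ← mulVec_transpose, hG, dotProduct_comm]
  ring

lemma Qf_mul_mul_transpose {k : ℕ} (G : Matrix (Fin m) (Fin m) R) (T : Matrix (Fin k) (Fin m) R)
    (a : Fin k → R) : Qf (T * G * Tᵀ) a = Qf G (a ᵥ* T) := by
  rw [Qf, Qf, ← mulVec_mulVec, ← mulVec_mulVec, mulVec_transpose, dotProduct_mulVec]

lemma Bf_map {S : Type*} [CommRing S] (f : R →+* S) (G : Matrix (Fin m) (Fin m) R)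
    (x y : Fin m → R) : Bf (G.map f) (f ∘ x) (f ∘ y) = f (Bf G x y) := by
  rw [Bf, Bf, RingHom.map_dotProduct]
  congr 1
  ext i
  exact (RingHom.map_mulVec f G y i).symm

lemma Qf_map {S : Type*} [CommRing S] (f : R →+* S) (G : Matrix (Fin m) (Fin m) R)
    (x : Fin m → R) : Qf (G.map f) (f ∘ x) = f (Qf G x) :=
  Bf_map f G x x

lemma dvd_Bf_of_forall_dvd {d : R} {G : Matrix (Fin m) (Fin m) R} (hG : ∀ i j, d ∣ G i j)
    (x y : Fin m → R) : d ∣ Bf G x y :=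
  show d ∣ ∑ i, x i * ∑ j, G i j * y j from
    Finset.dvd_sum fun i _ =>
      dvd_mul_of_dvd_right (Finset.dvd_sum fun j _ => (hG i j).mul_right _) _

lemma dvd_Qf_of_mem_lambda {k : ℕ} {G : Matrix (Fin m) (Fin m) R} {x : Fin m → R}
    (hx : x ∈ Lambda k G) : (k : R) ∣ Qf G x := by
  simpa [Qf] using hx 0

theorem image_vecMul_lambda {k : ℕ} (n : ℕ) (G : Matrix (Fin m) (Fin m) R)
    (T : Matrix (Fin k) (Fin m) R) :
    (· ᵥ* T) '' Lambda n (T * G * Tᵀ) = LambdaIn n G (Set.range (· ᵥ* T)) := by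
  have hdiff (a c : Fin k → R) : Qf G (a ᵥ* T + c ᵥ* T) - Qf G (c ᵥ* T)
      = Qf (T * G * Tᵀ) (a + c) - Qf (T * G * Tᵀ) c := by
    rw [Qf_mul_mul_transpose, Qf_mul_mul_transpose, add_vecMul]
  ext x
  constructor
  · rintro ⟨a, ha, rfl⟩
    exact ⟨⟨a, rfl⟩, by rintro _ ⟨c, rfl⟩; rw [hdiff]; exact ha c⟩
  · rintro ⟨⟨a, rfl⟩, ha⟩
    exact ⟨a, fun c => hdiff a c ▸ ha _ ⟨c, rfl⟩, rfl⟩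

end Forms

section Padic

variable {p : ℕ} [hp : Fact p.Prime] {m : ℕ} {G : Matrix (Fin m) (Fin m) ℤ}

lemma Normalized.two_dvd_Qf (hnorm : Normalized G) (w : Fin m → ℤ) : (2 : ℤ) ∣ Qf G w := by
  rw [← Ideal.mem_span_singleton, ← hnorm]
  exact Ideal.subset_span ⟨w, rfl⟩

lemma padic_dvd_Qf_of_forall_dvd (hG : ∀ w, (p : ℤ) ∣ Qf G w) (v : Fin m → ℤ_[p]) :
    (p : ℤ_[p]) ∣ Qf (padic p G) v := by
  rw [← Ideal.mem_span_singleton, ← PadicInt.maximalIdeal_eq_span_p, ← PadicInt.ker_toZMod,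
    RingHom.mem_ker]
  let w : Fin m → ℤ := fun i => ((PadicInt.toZMod (v i)).cast : ℤ)
  have hw : PadicInt.toZMod ∘ v = Int.castRingHom (ZMod p) ∘ w := by
    funext i
    simp [w]
  have hG_map : (padic p G).map PadicInt.toZMod = G.map (Int.castRingHom (ZMod p)) := by
    ext i j
    simp [padic]
  rw [← Qf_map, hw, hG_map, Qf_map, eq_intCast, ZMod.intCast_zmod_eq_zero_iff_dvd]
  exact hG w

lemma Normalized.two_dvd_Qf_padic (hnorm : Normalized G) (v : Fin m → ℤ_[p]) :
    (2 : ℤ_[p]) ∣ Qf (padic p G) v := by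
  by_cases hp2 : p = 2
  · subst hp2
    exact_mod_cast padic_dvd_Qf_of_forall_dvd hnorm.two_dvd_Qf v
  · refine IsUnit.dvd (not_not.1 fun h => hp2 ?_)
    rw [PadicInt.not_isUnit_iff, ← Int.cast_ofNat, PadicInt.norm_int_lt_one_iff_dvd] at h
    exact (Nat.prime_dvd_prime_iff_eq hp.out Nat.prime_two).1 (by exact_mod_cast h)

end Padic

section Watson

variable {p : ℕ} [Fact p.Prime] {m : ℕ} {G : Matrix (Fin m) (Fin m) ℤ}

theorem qValuesFull_of_not_dvd_Bf (hsym : G.IsSymm) (hnorm : Normalized G) {x z : Fin m → ℤ}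
    (hx : 2 * (p : ℤ) ∣ Qf G x) (hb : ¬ (p : ℤ) ∣ Bf G x z) : QValuesFull p G := by
  set f := Int.castRingHom ℤ_[p]
  obtain ⟨c, hc⟩ := hx
  obtain ⟨d, hd⟩ := hnorm.two_dvd_Qf z
  have hb_unit : IsUnit (f (Bf G x z)) := by
    by_contra h
    rw [PadicInt.not_isUnit_iff, eq_intCast, PadicInt.norm_int_lt_one_iff_dvd] at h
    exact hb h
  refine Set.Subset.antisymm ?_ fun t ⟨s, hs⟩ => ?_
  · rintro _ ⟨v, rfl⟩
    exact hnorm.two_dvd_Qf_padic v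
  -- `Q(r x + z) = 2 (p c r² + b r + d)` with `b = B(x, z)` a unit, so Hensel solves for `r`.
  obtain ⟨r, hr⟩ := PadicInt.exists_p_mul_mul_sq_add_mul_eq hb_unit (f c) (s - f d)
  refine ⟨r • (f ∘ x) + f ∘ z, ?_⟩
  rw [show padic p G = G.map f from rfl, Qf_add_of_isSymm (hsym.map f), Qf_smul, Bf_smul_left,
    Qf_map, Qf_map, Bf_map, hc, hd, hs]
  simp only [map_mul, map_ofNat, map_natCast]
  linear_combination 2 * hr

theorem mem_lambda_of_dvd_Qf (hsym : G.IsSymm) (hnorm : Normalized G)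
    (hcond : ¬ QValuesFull p G ∨ (p = 2 ∧ ScaleIdeal G = Ideal.span {(2 : ℤ)}))
    {x : Fin m → ℤ} (hx : ((2 * p : ℕ) : ℤ) ∣ Qf G x) : x ∈ Lambda (2 * p) G := by
  push_cast at hx ⊢
  have hB : ∀ z, (p : ℤ) ∣ Bf G x z := by
    rcases hcond with hnot_full | ⟨rfl, hscale⟩
    · exact fun z => not_not.1 fun hb => hnot_full (qValuesFull_of_not_dvd_Bf hsym hnorm hx hb)
    · intro z
      refine dvd_Bf_of_forall_dvd (fun i j => ?_) x z
      rw [← Ideal.mem_span_singleton, Nat.cast_ofNat, ← hscale]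
      exact Ideal.subset_span ⟨i, j, rfl⟩
  intro z
  rw [Qf_add_of_isSymm hsym, add_sub_right_comm, add_sub_cancel_right]
  exact dvd_add hx (mul_dvd_mul_left 2 (hB z))

end Watson

theorem lambda_of_representation_general (p : ℕ) [Fact p.Prime] {k m : ℕ}
    (G : Matrix (Fin m) (Fin m) ℤ) (hG : IsLat G) (hnorm : Normalized G)
    (hcond : ¬ QValuesFull p G ∨ (p = 2 ∧ ScaleIdeal G = Ideal.span {(2 : ℤ)}))
    (A : Matrix (Fin k) (Fin k) ℤ)
    (T : Matrix (Fin k) (Fin m) ℤ) (hT : A = T * G * Tᵀ) :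
    ((fun x => Matrix.vecMul x T) '' Lambda (2 * p) A
        = LambdaIn (2 * p) G (Set.range fun x => Matrix.vecMul x T))
    ∧ ((∃ U : Matrix (Fin m) (Fin k) ℤ, T * U = 1) →
        ∃ C : Submodule ℤ (Fin m → ℤ),
          (Submodule.map T.vecMulLinear (LambdaMod (2 * p) A)) ⊓ C = ⊥ ∧
          (Submodule.map T.vecMulLinear (LambdaMod (2 * p) A)) ⊔ C
            = LambdaMod (2 * p) G) := by
  subst hT
  have himage := image_vecMul_lambda (2 * p) G T
  refine ⟨himage, fun ⟨U, hU⟩ => Submodule.exists_inf_eq_bot_sup_eq_of_smul_mem ?_ ?_⟩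
  · rintro _ ⟨a, ha, rfl⟩
    apply mem_lambda_of_dvd_Qf hG.1 hnorm hcond
    rw [Matrix.vecMulLinear_apply, ← Qf_mul_mul_transpose]
    exact dvd_Qf_of_mem_lambda ha
  · -- `Λ_{2p}(L) ∩ σ(G) ⊆ Λ_{2p}(σ(G)) = σ(Λ_{2p}(G))`, and `σ(G)` is saturated in `L`.
    rintro c hc y hy ⟨a, -, ha⟩
    have hy_range : y ∈ Set.range (· ᵥ* T) :=
      Matrix.mem_range_vecMul_of_smul_mem hU hc ⟨a, ha⟩
    change y ∈ (· ᵥ* T) '' Lambda (2 * p) (T * G * Tᵀ)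
    rw [himage]
    exact ⟨hy_range, fun z _ => hy z⟩

/-- for a representation `σ : G → L` (given by `x ↦ x ᵥ* T`),
`σ(Λ_{2p}(G)) = Λ_{2p}(σ(G))`; if moreover `σ` is primitive, then `σ(Λ_{2p}(G))` is a
primitive sublattice (direct summand) of `Λ_{2p}(L)`. -/
theorem lambda_of_representation (p : ℕ) [Fact p.Prime] {k m : ℕ}
    (G : Matrix (Fin m) (Fin m) ℤ) (hG : IsLat G) (hnorm : Normalized G)
    (hcond : ¬ QValuesFull p G ∨ (p = 2 ∧ ScaleIdeal G = Ideal.span {(2 : ℤ)}))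
    (A : Matrix (Fin k) (Fin k) ℤ) (hA : IsLat A)
    (T : Matrix (Fin k) (Fin m) ℤ) (hT : A = T * G * Tᵀ) :
    ((fun x => Matrix.vecMul x T) '' Lambda (2 * p) A
        = LambdaIn (2 * p) G (Set.range fun x => Matrix.vecMul x T))
    ∧ ((∃ U : Matrix (Fin m) (Fin k) ℤ, T * U = 1) →
        ∃ C : Submodule ℤ (Fin m → ℤ),
          (Submodule.map T.vecMulLinear (LambdaMod (2 * p) A)) ⊓ C = ⊥ ∧
          (Submodule.map T.vecMulLinear (LambdaMod (2 * p) A)) ⊔ C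
            = LambdaMod (2 * p) G) :=
  lambda_of_representation_general p G hG hnorm hcond A T hT

end Paper
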